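/- arXiv:1909.07350 — 4 statements merged into one kernel-verified Lean document; each statement's English description precedes it below -/
import Mathlib

section
/- For every non-negative integer n, (-432)^n * Σ_{k=0}^n ((1/6)_k (5/6)_{n-k} / ((1)_k (1)_{n-k}))^2 = Σ_{k=0}^n C(6k,3k) * C(3k,2k) * C(2k,k) * C(n+k, n-k) * (-432)^{n-k}, where (a)_m denotes the Pochhammer symbol (rising factorial) and C denotes the binomial coefficient. -/
/-!
After dividing by `(-432)^n`, both sides are solutions of the three-term recurrence
`18 (n+2)^3 u(n+2) = (2n+3)(18n^2+54n+49) u(n+1) - 18 (n+1)^3 u(n)` (`recurrenceOp u n = 0`),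
and they agree for `n = 0, 1`. Each recurrence is proved by creative telescoping: applied to the
summand of either side, the recurrence operator becomes a difference `G(k+1) - G(k)` of an
explicit certificate (`lhsCert`, `rhsCert`, found by Zeilberger's algorithm), so the sum collapses
to boundary terms that cancel.
-/

open Finset
open scoped Nat

section LinearRecurrence

variable {R : Type*} [CommRing R] [IsDomain R]

theorem eq_of_linear_recurrence {u v : ℕ → R} (c₀ c₁ c₂ : ℕ → R)
    (hc₂ : ∀ n, c₂ n ≠ 0)
    (hu : ∀ n, c₂ n * u (n + 2) + c₁ n * u (n + 1) + c₀ n * u n = 0)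
    (hv : ∀ n, c₂ n * v (n + 2) + c₁ n * v (n + 1) + c₀ n * v n = 0)
    (h₀ : u 0 = v 0) (h₁ : u 1 = v 1) : u = v := by
  funext n
  induction n using Nat.twoStepInduction with
  | zero => exact h₀
  | one => exact h₁
  | more n ih₀ ih₁ =>
    refine mul_left_cancel₀ (hc₂ n) ?_
    linear_combination hu n - hv n - c₁ n * ih₁ - c₀ n * ih₀

end LinearRecurrence

theorem Nat.cast_choose_succ_mul {K : Type*} [CommRing K] (m r : ℕ) :
    (m.choose (r + 1) : K) * (r + 1) = m.choose r * (m - r) := by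
  rcases le_or_gt r m with h | h
  · exact_mod_cast congrArg (Nat.cast : ℕ → K) (Nat.choose_succ_right_eq m r)
  · simp [Nat.choose_eq_zero_of_lt h, Nat.choose_eq_zero_of_lt (h.trans (Nat.lt_succ_self r))]

section PochhammerRatio

variable {K : Type*} [Field K]

noncomputable def pochhammerRatioSq (a : K) (k : ℕ) : K :=
  ((ascPochhammer K k).eval a / (ascPochhammer K k).eval 1) ^ 2

@[simp]
theorem pochhammerRatioSq_zero (a : K) : pochhammerRatioSq a 0 = 1 := by
  simp [pochhammerRatioSq]

theorem pochhammerRatioSq_succ (a : K) (k : ℕ) :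
    pochhammerRatioSq a (k + 1) = pochhammerRatioSq a k * ((a + k) / (k + 1)) ^ 2 := by
  simp only [pochhammerRatioSq, ascPochhammer_succ_eval, mul_div_mul_comm, mul_pow]
  rw [add_comm 1]

end PochhammerRatio

def binomProd (k : ℕ) : ℚ :=
  (6 * k).choose (3 * k) * (3 * k).choose (2 * k) * (2 * k).choose k

theorem binomProd_eq (k : ℕ) : binomProd k = (6 * k)! / ((3 * k)! * k ! ^ 3) := by
  rw [binomProd, Nat.cast_choose ℚ (by omega : 3 * k ≤ 6 * k),
    Nat.cast_choose ℚ (by omega : 2 * k ≤ 3 * k), Nat.cast_choose ℚ (by omega : k ≤ 2 * k),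
    show 6 * k - 3 * k = 3 * k by omega, show 3 * k - 2 * k = k by omega,
    show 2 * k - k = k by omega]
  field_simp

theorem binomProd_succ (k : ℕ) :
    binomProd (k + 1) * (k + 1) ^ 3
      = 24 * (2 * k + 1) * (6 * k + 1) * (6 * k + 5) * binomProd k := by
  rw [binomProd_eq, binomProd_eq, show 6 * (k + 1) = 6 * k + 1 + 1 + 1 + 1 + 1 + 1 by ring,
    show 3 * (k + 1) = 3 * k + 1 + 1 + 1 by ring]
  simp only [Nat.factorial_succ]
  push_cast
  field_simp
  ring

def recurrenceOp (u : ℕ → ℚ) (n : ℕ) : ℚ :=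
  18 * ((n : ℚ) + 2) ^ 3 * u (n + 2) - (2 * n + 3) * (18 * n ^ 2 + 54 * n + 49) * u (n + 1)
    + 18 * ((n : ℚ) + 1) ^ 3 * u n

theorem eq_of_recurrenceOp_eq_zero {u v : ℕ → ℚ} (hu : ∀ n, recurrenceOp u n = 0)
    (hv : ∀ n, recurrenceOp v n = 0) (h₀ : u 0 = v 0) (h₁ : u 1 = v 1) : u = v :=
  eq_of_linear_recurrence (fun n => 18 * ((n : ℚ) + 1) ^ 3)
    (fun n => -((2 * n + 3) * (18 * n ^ 2 + 54 * n + 49))) (fun n => 18 * ((n : ℚ) + 2) ^ 3)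
    (fun n => by positivity) (fun n => by rw [← hu n, recurrenceOp]; ring)
    (fun n => by rw [← hv n, recurrenceOp]; ring) h₀ h₁

section LeftSide

local notation "A" => pochhammerRatioSq (1 / 6 : ℚ)
local notation "B" => pochhammerRatioSq (5 / 6 : ℚ)

noncomputable def lhs (n : ℕ) : ℚ := ∑ k ∈ range (n + 1), A k * B (n - k)

-- The certificate `G(n, k)` of the summand `A k * B (n - k)`, indexed by `k` and `m = n + 1 - k`.
noncomputable def lhsCert (k m : ℕ) : ℚ :=
  k ^ 2 * A k * B m * (k * (12 * m + 11) - 3 * (4 * m + 5) * (m + 1)) / (2 * ((m : ℚ) + 1) ^ 2)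

theorem recurrenceOp_lhs_term {k n : ℕ} (hk : k ≤ n) :
    recurrenceOp (fun n => A k * B (n - k)) n
      = lhsCert (k + 1) (n - k) - lhsCert k (n + 1 - k) := by
  obtain ⟨m, rfl⟩ := Nat.exists_eq_add_of_le hk
  simp only [recurrenceOp, lhsCert, show k + m + 2 - k = m + 1 + 1 by omega,
    show k + m + 1 - k = m + 1 by omega, Nat.add_sub_cancel_left, pochhammerRatioSq_succ]
  push_cast
  field_simp
  ring

theorem lhs_boundary (n : ℕ) :
    18 * ((n : ℚ) + 2) ^ 3 * (A (n + 1) * B 1 + A (n + 2))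
      - (2 * n + 3) * (18 * n ^ 2 + 54 * n + 49) * A (n + 1) + lhsCert (n + 1) 0 = 0 := by
  simp only [lhsCert, pochhammerRatioSq_succ, pochhammerRatioSq_zero]
  push_cast
  field_simp
  ring

theorem recurrenceOp_lhs (n : ℕ) : recurrenceOp lhs n = 0 := by
  have htelescope : ∑ k ∈ range (n + 1), recurrenceOp (fun n => A k * B (n - k)) n
      = lhsCert (n + 1) 0 := by
    rw [sum_congr rfl fun k hk => recurrenceOp_lhs_term (Nat.lt_succ_iff.mp (mem_range.mp hk))]
    have := sum_range_sub (fun k => lhsCert k (n + 1 - k)) (n + 1)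
    simp only [Nat.sub_self, Nat.add_sub_add_right] at this
    simpa [lhsCert] using this
  simp only [recurrenceOp, sum_add_distrib, sum_sub_distrib, ← mul_sum] at htelescope
  rw [recurrenceOp, lhs, lhs, lhs, sum_range_succ _ (n + 2), sum_range_succ _ (n + 1),
    sum_range_succ _ (n + 1)]
  simp only [Nat.sub_self, show n + 2 - (n + 1) = 1 by omega, pochhammerRatioSq_zero, mul_one]
  linear_combination htelescope + lhs_boundary n

end LeftSide

theorem recurrenceOp_sum_range {F : ℕ → ℕ → ℚ} (hF : ∀ n k, n < k → F n k = 0)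
    (n : ℕ) :
    recurrenceOp (fun n => ∑ k ∈ range (n + 1), F n k) n
      = ∑ k ∈ range (n + 3), recurrenceOp (fun n => F n k) n := by
  have extend : ∀ i ≤ n + 2, ∑ k ∈ range (i + 1), F i k = ∑ k ∈ range (n + 3), F i k :=
    fun i hi => sum_subset (range_subset_range.mpr (by omega))
      fun k _ hk => hF _ _ (by simp only [mem_range] at hk; omega)
  simp only [recurrenceOp, sum_add_distrib, sum_sub_distrib, ← mul_sum]
  rw [extend n (by omega), extend (n + 1) (by omega), extend (n + 2) le_rfl]

def rhsTerm (n k : ℕ) : ℚ := binomProd k * (n + k).choose (2 * k) * (-432 : ℚ)⁻¹ ^ k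

def rhsCert (n : ℕ) : ℕ → ℚ
  | 0 => 0
  | j + 1 => (2 * n + 3) * (6 * j + 1) * (6 * j + 5) * binomProd j
      * (n + j + 1).choose (2 * j) * (-432 : ℚ)⁻¹ ^ j

theorem recurrenceOp_rhsTerm (n k : ℕ) :
    recurrenceOp (fun n => rhsTerm n k) n = rhsCert n (k + 1) - rhsCert n k := by
  cases k with
  | zero => simp [recurrenceOp, rhsTerm, rhsCert, binomProd]; ring
  | succ j =>
    -- Pascal's rule and these two ratios express every binomial through `C(n+j+1, 2j)` without
    -- dividing by `n - j`, which may vanish; hence no case distinction between `j` and `n`.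
    have hc₁ : ((n + j + 1).choose (2 * j + 1) : ℚ)
        = (n + j + 1).choose (2 * j) * (n - j + 1) / (2 * j + 1) := by
      rw [eq_div_iff (by positivity)]
      have := Nat.cast_choose_succ_mul (K := ℚ) (n + j + 1) (2 * j)
      push_cast at this
      linear_combination this
    have hc₂ : ((n + j + 1).choose (2 * j + 2) : ℚ)
        = (n + j + 1).choose (2 * j + 1) * (n - j) / (2 * j + 2) := by
      rw [eq_div_iff (by positivity)]
      have := Nat.cast_choose_succ_mul (K := ℚ) (n + j + 1) (2 * j + 1)
      push_cast at this
      linear_combination this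
    have hb : binomProd (j + 1)
        = 24 * (2 * j + 1) * (6 * j + 1) * (6 * j + 5) * binomProd j / (j + 1) ^ 3 := by
      rw [eq_div_iff (by positivity), binomProd_succ]
    simp only [recurrenceOp, rhsTerm, rhsCert, show n + 2 + (j + 1) = n + j + 1 + 1 + 1 by omega,
      show n + 1 + (j + 1) = n + j + 1 + 1 by omega, show n + (j + 1) = n + j + 1 by omega,
      show 2 * (j + 1) = 2 * j + 1 + 1 by omega]
    rw [Nat.choose_succ_succ' (n + j + 1 + 1), Nat.choose_succ_succ' (n + j + 1) (2 * j + 1),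
      Nat.choose_succ_succ' (n + j + 1) (2 * j)]
    push_cast
    rw [hc₂, hc₁, hb]
    field_simp
    ring

def rhs (n : ℕ) : ℚ := ∑ k ∈ range (n + 1), rhsTerm n k

theorem recurrenceOp_rhs (n : ℕ) : recurrenceOp rhs n = 0 := by
  have vanish : ∀ n k, n < k → rhsTerm n k = 0 := fun n k h => by
    simp [rhsTerm, Nat.choose_eq_zero_of_lt (by omega : n + k < 2 * k)]
  unfold rhs
  rw [recurrenceOp_sum_range vanish,
    sum_congr rfl fun k _ => recurrenceOp_rhsTerm n k, sum_range_sub]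
  simp [rhsCert, Nat.choose_eq_zero_of_lt (by omega : n + (n + 2) + 1 < 2 * (n + 2))]

theorem lhs_eq_rhs : lhs = rhs := by
  refine eq_of_recurrenceOp_eq_zero recurrenceOp_lhs recurrenceOp_rhs ?_ ?_
  · simp [lhs, rhs, rhsTerm, binomProd]
  · simp [lhs, rhs, rhsTerm, binomProd, sum_range_succ, pochhammerRatioSq_succ]
    norm_num [Nat.choose]

theorem stmt_0 (n : ℕ) :
    (-432 : ℚ) ^ n *
      ∑ k ∈ Finset.range (n + 1),
        ((ascPochhammer ℚ k).eval (1/6) * (ascPochhammer ℚ (n - k)).eval (5/6) /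
          ((ascPochhammer ℚ k).eval 1 * (ascPochhammer ℚ (n - k)).eval 1)) ^ 2
    = ∑ k ∈ Finset.range (n + 1),
        (Nat.choose (6*k) (3*k) : ℚ) * (Nat.choose (3*k) (2*k)) * (Nat.choose (2*k) k) *
          (Nat.choose (n + k) (n - k)) * (-432 : ℚ) ^ (n - k) := by
  have hlhs : ∑ k ∈ range (n + 1),
      ((ascPochhammer ℚ k).eval (1/6) * (ascPochhammer ℚ (n - k)).eval (5/6) /
        ((ascPochhammer ℚ k).eval 1 * (ascPochhammer ℚ (n - k)).eval 1)) ^ 2 = lhs n :=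
    sum_congr rfl fun k _ => by rw [mul_div_mul_comm, mul_pow]; rfl
  have hrhs : ∀ k ∈ range (n + 1),
      (Nat.choose (6*k) (3*k) : ℚ) * (Nat.choose (3*k) (2*k)) * (Nat.choose (2*k) k) *
        (Nat.choose (n + k) (n - k)) * (-432 : ℚ) ^ (n - k) = (-432 : ℚ) ^ n * rhsTerm n k := by
    intro k hk
    have hkn : k ≤ n := Nat.lt_succ_iff.mp (mem_range.mp hk)
    rw [pow_sub₀ _ (by norm_num) hkn,
      Nat.choose_symm_of_eq_add (by omega : n + k = n - k + 2 * k), rhsTerm, binomProd, inv_pow]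
    ring
  rw [hlhs, sum_congr rfl hrhs, ← mul_sum, lhs_eq_rhs, rhs]
end

section
/- For every non-negative integer n, (-64)^n * Σ_{k=0}^n ((1/4)_k (3/4)_{n-k} / ((1)_k (1)_{n-k}))^2 = Σ_{k=0}^n C(4k,2k) * C(2k,k)^2 * C(n+k, n-k) * (-64)^{n-k}. -/
/-!
Divided by `(-64)^n`, both sides are sums `∑ k, F n k` of hypergeometric terms vanishing for
`k > n`. Zeilberger's algorithm finds for each of them a rational function `R` such that
`G n k = R n k * F (n + 2) k` satisfies
`8(n+2)³ F(n+2,k) - (2n+3)(8n²+24n+21) F(n+1,k) + 8(n+1)³ F(n,k) = G(n,k+1) - G(n,k)`.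
Summing over `k` telescopes, so both sums satisfy the same second-order recurrence with
nonvanishing leading coefficient, and they agree for `n = 0, 1`.
-/

open Finset Nat

section Recurrence

variable {R : Type*} [CommRing R]

theorem sum_range_eq_sum_range_of_vanishing {F : ℕ → ℕ → R} (hF : ∀ n k, n < k → F n k = 0)
    {n N : ℕ} (h : n < N) : ∑ k ∈ range (n + 1), F n k = ∑ k ∈ range N, F n k :=
  sum_subset (range_subset_range.2 h) fun k _ hk => hF n k (by simpa using hk)

theorem recurrence_of_telescoping {F G : ℕ → ℕ → R} (p q r : ℕ → R)
    (hF : ∀ n k, n < k → F n k = 0) (hG₀ : ∀ n, G n 0 = 0) (hG : ∀ n, G n (n + 3) = 0)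
    (hcert : ∀ n k,
      p n * F (n + 2) k + q n * F (n + 1) k + r n * F n k = G n (k + 1) - G n k)
    (n : ℕ) :
    p n * ∑ k ∈ range (n + 2 + 1), F (n + 2) k + q n * ∑ k ∈ range (n + 1 + 1), F (n + 1) k
      + r n * ∑ k ∈ range (n + 1), F n k = 0 := by
  rw [sum_range_eq_sum_range_of_vanishing hF (show n + 1 < n + 3 by omega),
    sum_range_eq_sum_range_of_vanishing hF (show n < n + 3 by omega), mul_sum, mul_sum, mul_sum,
    ← sum_add_distrib, ← sum_add_distrib, sum_congr rfl fun k _ => hcert n k,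
    sum_range_sub (G n), hG, hG₀, sub_self]

theorem eq_of_recurrence [IsDomain R] {p q r : ℕ → R} (hp : ∀ n, p n ≠ 0) {u v : ℕ → R}
    (hu : ∀ n, p n * u (n + 2) + q n * u (n + 1) + r n * u n = 0)
    (hv : ∀ n, p n * v (n + 2) + q n * v (n + 1) + r n * v n = 0)
    (h₀ : u 0 = v 0) (h₁ : u 1 = v 1) (n : ℕ) : u n = v n := by
  induction n using Nat.twoStepInduction with
  | zero => exact h₀
  | one => exact h₁
  | more n ih₀ ih₁ =>
    refine mul_left_cancel₀ (hp n) ?_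
    linear_combination hu n - hv n - q n * ih₁ - r n * ih₀

end Recurrence

section ChooseCast

variable {K : Type*} [Ring K]

theorem cast_choose_succ_right_mul (m r : ℕ) :
    (m.choose (r + 1) : K) * (r + 1) = m.choose r * (m - r) := by
  rcases le_or_gt r m with h | h
  · have := congrArg (Nat.cast : ℕ → K) (Nat.choose_succ_right_eq m r)
    push_cast [Nat.cast_sub h] at this
    exact this
  · simp [Nat.choose_eq_zero_of_lt h, Nat.choose_eq_zero_of_lt (h.trans (lt_add_one r))]

theorem cast_choose_succ_mul_sub (m r : ℕ) :
    ((m + 1).choose r : K) * (m + 1 - r) = m.choose r * (m + 1) := by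
  rcases le_or_gt r (m + 1) with h | h
  · have := congrArg (Nat.cast : ℕ → K) (Nat.choose_mul_succ_eq m r)
    push_cast [Nat.cast_sub h] at this
    exact this.symm
  · simp [Nat.choose_eq_zero_of_lt h, Nat.choose_eq_zero_of_lt ((lt_add_one m).trans h)]

theorem cast_centralBinom_succ {F : Type*} [Field F] [CharZero F] (m : ℕ) :
    (centralBinom (m + 1) : F) = centralBinom m * (2 * (2 * m + 1)) / (m + 1) := by
  rw [eq_div_iff (Nat.cast_add_one_ne_zero m), mul_comm (centralBinom m : F)]
  exact_mod_cast (mul_comm _ _).trans (succ_mul_centralBinom_succ m)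

end ChooseCast

def recCoeff₂ (n : ℕ) : ℚ := 8 * (n + 2) ^ 3

def recCoeff₁ (n : ℕ) : ℚ := -((2 * n + 3) * (8 * n ^ 2 + 24 * n + 21))

def recCoeff₀ (n : ℕ) : ℚ := 8 * (n + 1) ^ 3

-- `C(n,k) / n!` is `1 / (k! (n-k)!)` for `k ≤ n` and kills the terms with truncated `n - k`.
noncomputable def pochTerm (n k : ℕ) : ℚ :=
  ((n.choose k : ℚ) * (ascPochhammer ℚ k).eval (1 / 4) * (ascPochhammer ℚ (n - k)).eval (3 / 4)
    / n !) ^ 2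

theorem pochTerm_add (k m : ℕ) :
    pochTerm (k + m) k = ((ascPochhammer ℚ k).eval (1 / 4) * (ascPochhammer ℚ m).eval (3 / 4)
      / (k ! * m !)) ^ 2 := by
  rw [pochTerm, Nat.cast_add_choose, Nat.add_sub_cancel_left]
  field_simp

theorem pochTerm_eq_zero {n k : ℕ} (h : n < k) : pochTerm n k = 0 := by
  simp [pochTerm, Nat.choose_eq_zero_of_lt h]

-- The shift relations are oriented so that no denominator vanishes; they then hold for all `k`.
theorem pochTerm_succ_right (n k : ℕ) :
    pochTerm n (k + 1) = pochTerm n k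
      * (((n - k) * (4 * k + 1)) / ((k + 1) * (4 * (n - k) - 1)) : ℚ) ^ 2 := by
  rcases lt_or_ge k n with hk | hk
  · obtain ⟨m, rfl⟩ := Nat.exists_eq_add_of_lt hk
    rw [show k + m + 1 = k + 1 + m by ring, pochTerm_add, show k + 1 + m = k + (m + 1) by ring,
      pochTerm_add, ascPochhammer_succ_eval, ascPochhammer_succ_eval, factorial_succ,
      factorial_succ]
    push_cast
    rw [show 4 * ((k : ℚ) + (m + 1) - k) - 1 = 4 * (3 / 4 + m) by ring]
    have : (3 / 4 + m : ℚ) ≠ 0 := by positivity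
    field_simp
    ring
  · rcases hk.eq_or_lt with rfl | hk
    · simp [pochTerm_eq_zero (lt_add_one n)]
    · simp [pochTerm_eq_zero hk, pochTerm_eq_zero (hk.trans (lt_add_one k))]

theorem pochTerm_succ_left (n k : ℕ) :
    pochTerm n k = pochTerm (n + 1) k * ((4 * (n + 1 - k)) / (4 * (n - k) + 3) : ℚ) ^ 2 := by
  rcases le_or_gt k n with hk | hk
  · obtain ⟨m, rfl⟩ := Nat.exists_eq_add_of_le hk
    rw [show k + m + 1 = k + (m + 1) by ring, pochTerm_add, pochTerm_add, ascPochhammer_succ_eval,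
      factorial_succ]
    push_cast
    rw [show 4 * ((k : ℚ) + m - k) + 3 = 4 * (3 / 4 + m) by ring]
    have : (3 / 4 + m : ℚ) ≠ 0 := by positivity
    field_simp
    ring
  · rcases (Nat.succ_le_of_lt hk).eq_or_lt with rfl | hk'
    · simp [pochTerm_eq_zero hk]
    · simp [pochTerm_eq_zero hk, pochTerm_eq_zero hk']

noncomputable def pochCert (n k : ℕ) : ℚ :=
  8 * k ^ 2 * (8 * n * k - 8 * k ^ 2 + 18 * k - 3 * n - 6) / (4 * (n - k) + 7) ^ 2
    * pochTerm (n + 2) k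

theorem pochTerm_telescoping (n k : ℕ) :
    recCoeff₂ n * pochTerm (n + 2) k + recCoeff₁ n * pochTerm (n + 1) k
      + recCoeff₀ n * pochTerm n k = pochCert n (k + 1) - pochCert n k := by
  rw [pochCert, pochCert, pochTerm_succ_right, pochTerm_succ_left n, pochTerm_succ_left (n + 1),
    recCoeff₂, recCoeff₁, recCoeff₀]
  have h₁ : (k + 1 : ℚ) ≠ 0 := by positivity
  have h₃ : (4 * (n - k) + 3 : ℚ) ≠ 0 := by exact_mod_cast (by omega : (4 * (n - k) + 3 : ℤ) ≠ 0)
  have h₇ : (4 * (n - k) + 7 : ℚ) ≠ 0 := by exact_mod_cast (by omega : (4 * (n - k) + 7 : ℤ) ≠ 0)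
  generalize pochTerm (n + 1 + 1) k = T
  push_cast
  rw [show 4 * ((n : ℚ) + 1 - k) + 3 = 4 * (n - k) + 7 by ring,
    show 4 * ((n : ℚ) - (k + 1)) + 7 = 4 * (n - k) + 3 by ring,
    show 4 * ((n : ℚ) + 2 - k) - 1 = 4 * (n - k) + 7 by ring]
  field_simp
  ring

noncomputable def binomTerm (n k : ℕ) : ℚ :=
  centralBinom (2 * k) * centralBinom k ^ 2 * (n + k).choose (2 * k) * (-1 / 64) ^ k

theorem binomTerm_eq_zero {n k : ℕ} (h : n < k) : binomTerm n k = 0 := by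
  simp [binomTerm, Nat.choose_eq_zero_of_lt (show n + k < 2 * k by omega)]

theorem binomTerm_succ_left (n k : ℕ) :
    binomTerm n k = binomTerm (n + 1) k * ((n - k + 1) / (n + k + 1) : ℚ) := by
  have h := cast_choose_succ_mul_sub (K := ℚ) (n + k) (2 * k)
  rw [binomTerm, binomTerm, show n + 1 + k = n + k + 1 by ring]
  push_cast at h ⊢
  generalize (-1 / 64 : ℚ) ^ k = z
  field_simp
  linear_combination (-(centralBinom (2 * k) * centralBinom k ^ 2 * z) : ℚ) * h

theorem binomTerm_succ_right (n k : ℕ) :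
    binomTerm n (k + 1) = binomTerm n k
      * (-((4 * k + 1) * (4 * k + 3) * (n - k) * (n + k + 1)) / (16 * (k + 1) ^ 4) : ℚ) := by
  have h₁ := cast_choose_succ_right_mul (K := ℚ) (n + k) (2 * k)
  have h₂ := congrArg (Nat.cast : ℕ → ℚ) (add_one_mul_choose_eq (n + k) (2 * k + 1))
  rw [binomTerm, binomTerm, show 2 * (k + 1) = 2 * k + 1 + 1 by ring, cast_centralBinom_succ,
    cast_centralBinom_succ, cast_centralBinom_succ, show n + (k + 1) = n + k + 1 by ring,
    pow_succ (-1 / 64 : ℚ) k]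
  push_cast at h₁ h₂ ⊢
  generalize (-1 / 64 : ℚ) ^ k = z
  field_simp
  linear_combination (128 * centralBinom (2 * k) * centralBinom k ^ 2 * z * (k + 1) * (4 * k + 1)
    * (4 * k + 3) : ℚ) * ((2 * k + 1) * h₂ - (n + k + 1) * h₁)

noncomputable def binomCert (n k : ℕ) : ℚ :=
  -16 * (2 * n + 3) * k ^ 4 / ((n + k + 1) * (n + k + 2)) * binomTerm (n + 2) k

theorem binomTerm_telescoping (n k : ℕ) :
    recCoeff₂ n * binomTerm (n + 2) k + recCoeff₁ n * binomTerm (n + 1) k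
      + recCoeff₀ n * binomTerm n k = binomCert n (k + 1) - binomCert n k := by
  rw [binomCert, binomCert, binomTerm_succ_right, binomTerm_succ_left n,
    binomTerm_succ_left (n + 1), recCoeff₂, recCoeff₁, recCoeff₀]
  generalize binomTerm (n + 1 + 1) k = T
  push_cast
  field_simp
  ring

theorem pochTerm_sum_recurrence (n : ℕ) :
    recCoeff₂ n * ∑ k ∈ range (n + 2 + 1), pochTerm (n + 2) k
      + recCoeff₁ n * ∑ k ∈ range (n + 1 + 1), pochTerm (n + 1) k
      + recCoeff₀ n * ∑ k ∈ range (n + 1), pochTerm n k = 0 :=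
  recurrence_of_telescoping _ _ _ (fun _ _ => pochTerm_eq_zero) (by simp [pochCert])
    (by simp [pochCert, pochTerm_eq_zero]) pochTerm_telescoping n

theorem binomTerm_sum_recurrence (n : ℕ) :
    recCoeff₂ n * ∑ k ∈ range (n + 2 + 1), binomTerm (n + 2) k
      + recCoeff₁ n * ∑ k ∈ range (n + 1 + 1), binomTerm (n + 1) k
      + recCoeff₀ n * ∑ k ∈ range (n + 1), binomTerm n k = 0 :=
  recurrence_of_telescoping _ _ _ (fun _ _ => binomTerm_eq_zero) (by simp [binomCert])
    (by simp [binomCert, binomTerm_eq_zero]) binomTerm_telescoping n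

theorem sum_pochTerm_eq_sum_binomTerm (n : ℕ) :
    ∑ k ∈ range (n + 1), pochTerm n k = ∑ k ∈ range (n + 1), binomTerm n k :=
  eq_of_recurrence (u := fun n => ∑ k ∈ range (n + 1), pochTerm n k)
    (v := fun n => ∑ k ∈ range (n + 1), binomTerm n k) (fun n => by unfold recCoeff₂; positivity)
    pochTerm_sum_recurrence binomTerm_sum_recurrence (by simp [pochTerm, binomTerm])
    (by norm_num [sum_range_succ, pochTerm, binomTerm, ascPochhammer_one, centralBinom, Nat.choose])
    n

theorem pochTerm_eq {n k : ℕ} (h : k ≤ n) :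
    pochTerm n k = ((ascPochhammer ℚ k).eval (1 / 4) * (ascPochhammer ℚ (n - k)).eval (3 / 4)
      / ((ascPochhammer ℚ k).eval 1 * (ascPochhammer ℚ (n - k)).eval 1)) ^ 2 := by
  obtain ⟨m, rfl⟩ := Nat.exists_eq_add_of_le h
  rw [Nat.add_sub_cancel_left, pochTerm_add, ascPochhammer_eval_one, ascPochhammer_eval_one]

theorem neg_sixtyFour_pow_mul_binomTerm {n k : ℕ} (h : k ≤ n) :
    (-64 : ℚ) ^ n * binomTerm n k = (4 * k).choose (2 * k) * (2 * k).choose k ^ 2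
      * (n + k).choose (n - k) * (-64 : ℚ) ^ (n - k) := by
  obtain ⟨m, rfl⟩ := Nat.exists_eq_add_of_le h
  rw [Nat.add_sub_cancel_left, binomTerm, centralBinom_eq_two_mul_choose,
    centralBinom_eq_two_mul_choose, show 2 * (2 * k) = 4 * k by ring,
    show k + m + k = 2 * k + m by ring, choose_symm_add, pow_add]
  have : (-64 : ℚ) ^ k * (-1 / 64) ^ k = 1 := by rw [← mul_pow]; norm_num
  linear_combination ((4 * k).choose (2 * k) * (2 * k).choose k ^ 2
      * (2 * k + m).choose m * (-64 : ℚ) ^ m : ℚ) * this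

theorem stmt_1 (n : ℕ) :
    (-64 : ℚ) ^ n *
      ∑ k ∈ Finset.range (n + 1),
        ((ascPochhammer ℚ k).eval (1/4) * (ascPochhammer ℚ (n - k)).eval (3/4) /
          ((ascPochhammer ℚ k).eval 1 * (ascPochhammer ℚ (n - k)).eval 1)) ^ 2
    = ∑ k ∈ Finset.range (n + 1),
        (Nat.choose (4*k) (2*k) : ℚ) * (Nat.choose (2*k) k) ^ 2 *
          (Nat.choose (n + k) (n - k)) * (-64 : ℚ) ^ (n - k) := by
  rw [← sum_congr rfl fun k hk => pochTerm_eq (mem_range_succ_iff.1 hk),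
    sum_pochTerm_eq_sum_binomTerm, mul_sum]
  exact sum_congr rfl fun k hk => neg_sixtyFour_pow_mul_binomTerm (mem_range_succ_iff.1 hk)
end

section
/- Define b(n) = (-27)^n * Σ_{k=0}^n ((1/3)_k (2/3)_{n-k} / (k!·(n-k)!))^2. Then for all n ≥ 0, (n+2)^3 * b(n+2) + 3(2n+3)(9n^2+27n+23) * b(n+1) + 729 (n+1)^3 * b(n) = 0. -/
/-!
Write `b n = (-27)^n * s n`. The recurrence for `b` is equivalent to
`9(n+2)³ s(n+2) - (2n+3)(9n²+27n+23) s(n+1) + 9(n+1)³ s(n) = 0`, which is proved by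
creative telescoping (Zeilberger's algorithm): with `t n k` the `k`-th summand of `s n`, the
combination `9(n+2)³ t(n+2,k) - (2n+3)(9n²+27n+23) t(n+1,k) + 9(n+1)³ t(n,k)` equals
`G(k+1) - G(k)` for `G(k) = R(n,k) t(n+2,k)` with an explicit rational certificate `R`;
since all terms are products of squared Pochhammer quotients, this is a rational-function
identity after dividing by `t(n,k)`. Summing over `k ≤ n` leaves `G(n+1)` (as `R(n,0) = 0`),
which cancels the terms `k = n+1, n+2` that only occur in `s(n+1)` and `s(n+2)`.
-/

open Finset

noncomputable def pochRatioSq {K : Type*} [Field K] (a : K) (k : ℕ) : K :=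
  ((ascPochhammer K k).eval a / k.factorial) ^ 2

theorem pochRatioSq_succ {K : Type*} [Field K] [CharZero K] (a : K) (k : ℕ) :
    pochRatioSq a (k + 1) = ((a + k) / (k + 1)) ^ 2 * pochRatioSq a k := by
  have hk : (k : K) + 1 ≠ 0 := by exact_mod_cast k.succ_ne_zero
  simp only [pochRatioSq, ascPochhammer_succ_right, Polynomial.eval_mul, Polynomial.eval_add,
    Polynomial.eval_X, Polynomial.eval_natCast, Nat.factorial_succ, Nat.cast_mul, Nat.cast_succ]
  field_simp

noncomputable def summand (n k : ℕ) : ℚ :=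
  pochRatioSq (1 / 3 : ℚ) k * pochRatioSq (2 / 3 : ℚ) (n - k)

def wzCertificate (n k : ℕ) : ℚ :=
  9 * (k : ℚ) ^ 2 * (3 * ((n : ℚ) + 1) * ((n : ℚ) + 2) + 2 * k - 3 * (k : ℚ) ^ 2) /
    (3 * (n : ℚ) + 5 - 3 * k) ^ 2

noncomputable def telescoper (n k : ℕ) : ℚ := wzCertificate n k * summand (n + 2) k

theorem telescoper_succ_sub (n k : ℕ) (hk : k ≤ n) :
    9 * ((n : ℚ) + 2) ^ 3 * summand (n + 2) k
      - (2 * (n : ℚ) + 3) * (9 * (n : ℚ) ^ 2 + 27 * n + 23) * summand (n + 1) k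
      + 9 * ((n : ℚ) + 1) ^ 3 * summand n k
      = telescoper n (k + 1) - telescoper n k := by
  obtain ⟨m, rfl⟩ := Nat.exists_eq_add_of_le hk
  have e₂ : k + m + 2 - k = m + 1 + 1 := by omega
  have e₁ : k + m + 1 - k = m + 1 := by omega
  have e₁' : k + m + 2 - (k + 1) = m + 1 := by omega
  simp only [telescoper, wzCertificate, summand, e₂, e₁, e₁', Nat.add_sub_cancel_left,
    pochRatioSq_succ]
  push_cast
  have hm₁ : 3 * ((k : ℚ) + m) + 5 - 3 * k = 3 * m + 5 := by ring
  have hm₂ : 3 * ((k : ℚ) + m) + 5 - 3 * (k + 1) = 3 * m + 2 := by ring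
  rw [hm₁, hm₂]
  have : (3 * (m : ℚ) + 5) ≠ 0 := by positivity
  have : (3 * (m : ℚ) + 2) ≠ 0 := by positivity
  field_simp
  ring

theorem boundary_terms (n : ℕ) :
    9 * ((n : ℚ) + 2) ^ 3 * (summand (n + 2) (n + 1) + summand (n + 2) (n + 2))
      - (2 * (n : ℚ) + 3) * (9 * (n : ℚ) ^ 2 + 27 * n + 23) * summand (n + 1) (n + 1)
      + telescoper n (n + 1) = 0 := by
  have e : n + 2 - (n + 1) = 0 + 1 := by omega
  simp only [telescoper, wzCertificate, summand, e, Nat.sub_self, pochRatioSq_succ]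
  push_cast
  have : 3 * (n : ℚ) + 5 - 3 * (n + 1) = 2 := by ring
  rw [this]
  field_simp
  ring

theorem sum_summand_recurrence (n : ℕ) :
    9 * ((n : ℚ) + 2) ^ 3 * ∑ k ∈ range (n + 3), summand (n + 2) k
      - (2 * (n : ℚ) + 3) * (9 * (n : ℚ) ^ 2 + 27 * n + 23) *
        ∑ k ∈ range (n + 2), summand (n + 1) k
      + 9 * ((n : ℚ) + 1) ^ 3 * ∑ k ∈ range (n + 1), summand n k = 0 := by
  have htel : ∑ k ∈ range (n + 1), (telescoper n (k + 1) - telescoper n k) =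
      telescoper n (n + 1) := by
    rw [sum_range_sub]
    simp [telescoper, wzCertificate]
  rw [← boundary_terms n, ← htel, ← sum_congr rfl fun k hk => telescoper_succ_sub n k
    (Nat.lt_succ_iff.mp (mem_range.mp hk))]
  simp only [sum_range_succ (n := n + 2), sum_range_succ (n := n + 1), sum_add_distrib,
    sum_sub_distrib, ← mul_sum]
  ring

theorem stmt_4 (b : ℕ → ℚ)
    (hb : ∀ n : ℕ, b n = (-27 : ℚ) ^ n *
      ∑ k ∈ Finset.range (n + 1),
        ((ascPochhammer ℚ k).eval (1/3) * (ascPochhammer ℚ (n - k)).eval (2/3) /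
          ((k.factorial : ℚ) * ((n - k).factorial : ℚ))) ^ 2) :
    ∀ n : ℕ,
      ((n : ℚ) + 2) ^ 3 * b (n + 2) +
        3 * (2 * (n : ℚ) + 3) * (9 * (n : ℚ) ^ 2 + 27 * n + 23) * b (n + 1) +
        729 * ((n : ℚ) + 1) ^ 3 * b n = 0 := by
  have hb' : ∀ N, b N = (-27 : ℚ) ^ N * ∑ k ∈ range (N + 1), summand N k := fun N => by
    simp only [hb, summand, pochRatioSq, ← mul_pow, mul_div_mul_comm]
  intro n
  rw [hb', hb', hb']
  linear_combination 81 * (-27 : ℚ) ^ n * sum_summand_recurrence n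
end

section
/- Define c(n) = Σ_{k=0}^n C(6k,3k) * C(3k,2k) * C(2k,k) * C(n+k, n-k) * (-432)^{n-k}. Then for all n ≥ 0, (n+2)^3 * c(n+2) + 24(2n+3)(18n^2+54n+49) * c(n+1) + 186624 (n+1)^3 * c(n) = 0. -/
/-!
Creative telescoping. `cert` is the certificate produced by Zeilberger's algorithm: the recurrence
operator in `n` applied to `term n k` equals `cert n (k + 1) - cert n k` whenever `k ≤ n`. As `term`
is hypergeometric in both variables, this is a rational-function identity after dividing by
`term (n + 2) k`. Summing over `k ≤ n` telescopes to `cert n (n + 1)`, which cancels the summands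
`k = n + 1, n + 2` that `c (n + 1)` and `c (n + 2)` have beyond the common range.
-/

open Finset
open scoped Nat

namespace SeqC

def coeff (k : ℕ) : ℚ := ((6 * k).choose (3 * k) * (3 * k).choose (2 * k) * (2 * k).choose k : ℕ)

lemma coeff_eq_factorial (k : ℕ) : coeff k = (6 * k)! / ((3 * k)! * k ! ^ 3) := by
  rw [coeff, Nat.cast_mul, Nat.cast_mul, Nat.cast_choose ℚ (by omega : 3 * k ≤ 6 * k),
    Nat.cast_choose ℚ (by omega : 2 * k ≤ 3 * k), Nat.cast_choose ℚ (by omega : k ≤ 2 * k),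
    show 6 * k - 3 * k = 3 * k by omega, show 3 * k - 2 * k = k by omega,
    show 2 * k - k = k by omega]
  field_simp

lemma coeff_succ (k : ℕ) :
    ((k : ℚ) + 1) ^ 3 * coeff (k + 1) = 24 * (2 * k + 1) * (6 * k + 1) * (6 * k + 5) * coeff k := by
  rw [coeff_eq_factorial, coeff_eq_factorial, show 6 * (k + 1) = 6 * k + 5 + 1 by ring,
    show 3 * (k + 1) = 3 * k + 2 + 1 by ring]
  simp only [Nat.factorial_succ]
  push_cast
  field_simp
  ring

def term (n k : ℕ) : ℚ := coeff k * (n + k).choose (n - k) * (-432) ^ (n - k)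

lemma term_succ_left {n k : ℕ} (hk : k ≤ n) :
    ((n : ℚ) + 1 - k) * term (n + 1) k = -432 * (n + k + 1) * term n k := by
  have h : ((n + k + 1).choose (n - k + 1) : ℚ) * ((n - k : ℕ) + 1)
      = (n + k + 1) * (n + k).choose (n - k) := by
    exact_mod_cast (Nat.add_one_mul_choose_eq _ _).symm
  rw [Nat.cast_sub hk] at h
  rw [term, term, show n + 1 + k = n + k + 1 by omega, show n + 1 - k = n - k + 1 by omega,
    pow_succ]
  linear_combination (-432 * coeff k * (-432) ^ (n - k)) * h

lemma term_succ_right {n k : ℕ} (hk : k < n) :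
    -36 * ((k : ℚ) + 1) ^ 4 * term n (k + 1)
      = (6 * k + 1) * (6 * k + 5) * (n + k + 1) * (n - k) * term n k := by
  obtain ⟨j, rfl⟩ : ∃ j, n = j + k + 1 := ⟨n - k - 1, by omega⟩
  have h1 : ((j + 2 * k + 1).choose j : ℚ) * (j + 2 * k + 2)
      = (j + 2 * k + 2).choose j * (2 * k + 2) := by
    have := Nat.choose_mul_succ_eq (j + 2 * k + 1) j
    rw [show j + 2 * k + 1 + 1 - j = 2 * k + 2 by omega] at this
    exact_mod_cast this
  have h2 : ((j + 2 * k + 1).choose (j + 1) : ℚ) * (j + 1)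
      = (j + 2 * k + 1).choose j * (2 * k + 1) := by
    have := Nat.choose_succ_right_eq (j + 2 * k + 1) j
    rw [show j + 2 * k + 1 - j = 2 * k + 1 by omega] at this
    exact_mod_cast this
  rw [term, term, show j + k + 1 + (k + 1) = j + 2 * k + 2 by omega,
    show j + k + 1 - (k + 1) = j by omega, show j + k + 1 + k = j + 2 * k + 1 by omega,
    show j + k + 1 - k = j + 1 by omega, pow_succ]
  push_cast
  linear_combination (-36 * (k + 1) * ((j + 2 * k + 2).choose j : ℚ) * (-432) ^ j) * coeff_succ k
    + (432 * (6 * k + 1) * (6 * k + 5) * (j + 2 * k + 2) * coeff k * (-432) ^ j) * h2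
    + (432 * (6 * k + 1) * (6 * k + 5) * (2 * k + 1) * coeff k * (-432) ^ j) * h1

def cert (n k : ℕ) : ℚ := -2 * (2 * n + 3) * k ^ 4 / ((n + k + 1) * (n + k + 2)) * term (n + 2) k

lemma term_telescope {n k : ℕ} (hk : k ≤ n) :
    ((n : ℚ) + 2) ^ 3 * term (n + 2) k
      + 24 * (2 * n + 3) * (18 * n ^ 2 + 54 * n + 49) * term (n + 1) k
      + 186624 * ((n : ℚ) + 1) ^ 3 * term n k = cert n (k + 1) - cert n k := by
  have step0 := term_succ_left hk
  have step1 : ((n : ℚ) + 2 - k) * term (n + 2) k = -432 * (n + k + 2) * term (n + 1) k := by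
    have := term_succ_left (show k ≤ n + 1 by omega)
    push_cast at this
    linear_combination this
  have stepk := term_succ_right (show k < n + 2 by omega)
  push_cast at stepk
  have h0 : term n k = (n + 1 - k) / (-432 * (n + k + 1)) * term (n + 1) k := by
    field_simp
    linear_combination step0
  have h1 : term (n + 1) k = (n + 2 - k) / (-432 * (n + k + 2)) * term (n + 2) k := by
    field_simp
    linear_combination step1
  have hk1 : term (n + 2) (k + 1) = (6 * k + 1) * (6 * k + 5) * (n + k + 3) * (n + 2 - k)
      / (-36 * (k + 1) ^ 4) * term (n + 2) k := by
    field_simp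
    linear_combination -stepk
  rw [cert, cert, h0, h1, hk1]
  push_cast
  field_simp
  ring

/-- `term n k` does not vanish for `k > n` (there `n - k = 0`), so the top summands of `c (n + 1)`
and `c (n + 2)` are not covered by `term_telescope` and are balanced against `cert n (n + 1)`. -/
lemma term_boundary (n : ℕ) :
    ((n : ℚ) + 2) ^ 3 * (term (n + 2) (n + 1) + term (n + 2) (n + 2))
      + 24 * (2 * n + 3) * (18 * n ^ 2 + 54 * n + 49) * term (n + 1) (n + 1)
      + cert n (n + 1) = 0 := by
  have h : ((n : ℚ) + 2) ^ 3 * coeff (n + 2)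
      = 24 * (2 * n + 3) * (6 * n + 7) * (6 * n + 11) * coeff (n + 1) := by
    have := coeff_succ (n + 1)
    push_cast at this
    linear_combination this
  simp only [cert, term, show n + 2 - (n + 1) = 1 by omega, Nat.sub_self, Nat.choose_one_right,
    Nat.choose_zero_right]
  push_cast
  field_simp
  linear_combination 2 * (2 * (n : ℚ) + 3) * (n + 1) * h

lemma cert_zero (n : ℕ) : cert n 0 = 0 := by
  simp [cert]

def c (n : ℕ) : ℚ := ∑ k ∈ range (n + 1), term n k

theorem c_recurrence (n : ℕ) :
    ((n : ℚ) + 2) ^ 3 * c (n + 2) + 24 * (2 * n + 3) * (18 * n ^ 2 + 54 * n + 49) * c (n + 1)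
      + 186624 * ((n : ℚ) + 1) ^ 3 * c n = 0 := by
  have hsum : ∑ k ∈ range (n + 1), (((n : ℚ) + 2) ^ 3 * term (n + 2) k
      + 24 * (2 * n + 3) * (18 * n ^ 2 + 54 * n + 49) * term (n + 1) k
      + 186624 * ((n : ℚ) + 1) ^ 3 * term n k) = cert n (n + 1) := by
    rw [sum_congr rfl fun k hk => term_telescope (mem_range_succ_iff.mp hk), sum_range_sub,
      cert_zero, sub_zero]
  simp only [sum_add_distrib, ← mul_sum] at hsum
  rw [c, c, c, sum_range_succ _ (n + 2), sum_range_succ _ (n + 1), sum_range_succ _ (n + 1)]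
  linear_combination hsum + term_boundary n

end SeqC

theorem stmt_5 (c : ℕ → ℤ)
    (hc : ∀ n : ℕ, c n = ∑ k ∈ Finset.range (n + 1),
      (Nat.choose (6*k) (3*k) : ℤ) * (Nat.choose (3*k) (2*k)) * (Nat.choose (2*k) k) *
        (Nat.choose (n + k) (n - k)) * (-432 : ℤ) ^ (n - k)) :
    ∀ n : ℕ,
      ((n : ℤ) + 2) ^ 3 * c (n + 2) +
        24 * (2 * (n : ℤ) + 3) * (18 * (n : ℤ) ^ 2 + 54 * n + 49) * c (n + 1) +
        186624 * ((n : ℤ) + 1) ^ 3 * c n = 0 := by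
  have hcast : ∀ n, (c n : ℚ) = SeqC.c n := by
    intro n
    simp [hc, SeqC.c, SeqC.term, SeqC.coeff]
  intro n
  have h := SeqC.c_recurrence n
  rw [← hcast, ← hcast, ← hcast] at h
  exact_mod_cast h
end
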